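/- Let P be a formula-based program, I an interpretation and α a countable ordinal such that I ⊑_α T_P(I). Then: (1) for every limit ordinal γ > 0 and every interpretation M, if T^β_{P,α}(I) ⊑_α M for all β < γ, then T^γ_{P,α}(I) ⊑_α M; (2) for all ordinals β ≤ γ, T^β_{P,α}(I) ⊑_α T^γ_{P,α}(I). -/

import Mathlib

/-!
Infinite-valued semantics for formula-based logic programs
(Rondogiannis–Wadge style), following Lüdecke,
"Every Formula-Based Logic Program Has a Least Infinite-Valued Model".
-/

noncomputable section

namespace ILP

attribute [local instance] Classical.propDecidable

/-- The first uncountable ordinal. -/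
def omega1 : Ordinal.{0} := Ordinal.omega 1

lemma omega1_isLimit : Order.IsSuccLimit omega1 := Cardinal.isSuccLimit_omega 1

lemma zero_lt_omega1 : (0 : Ordinal) < omega1 := omega1_isLimit.pos

lemma succ_lt_omega1 {a : Ordinal} (h : a < omega1) : a + 1 < omega1 := by
  rw [Ordinal.add_one_eq_succ]
  exact omega1_isLimit.succ_lt h

/-- Pre-truth-values: `F α`, `0`, `T α` for arbitrary ordinals `α`. -/
inductive TVPre : Type 1 where
  | F : Ordinal → TVPre
  | zero : TVPre
  | T : Ordinal → TVPre

/-- A pre-truth-value is countable if its index is a countable ordinal. -/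
def TVPre.countable : TVPre → Prop
  | .F a => a < omega1
  | .zero => True
  | .T a => a < omega1

/-- The set `W` of truth values:
`F_α` (false values) for countable `α`, `0`, and `T_α` (true values) for countable `α`. -/
def W : Type 1 := {v : TVPre // v.countable}

/-- The strict order on truth values:
`F_0 < F_1 < ... < 0 < ... < T_1 < T_0`. -/
def TVPre.lt : TVPre → TVPre → Prop
  | .F a, .F b => a < b
  | .F _, .zero => True
  | .F _, .T _ => True
  | .zero, .T _ => True
  | .T a, .T b => b < a
  | _, _ => False

instance : LT W := ⟨fun x y => TVPre.lt x.1 y.1⟩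

instance : LE W := ⟨fun x y => x = y ∨ x < y⟩

lemma TVPre.lt_trans {a b c : TVPre} (hab : a.lt b) (hbc : b.lt c) : a.lt c := by
  cases a <;> cases b <;> cases c <;> simp_all [TVPre.lt] <;>
    first | exact hab.trans hbc | exact hbc.trans hab

lemma TVPre.lt_irrefl {a : TVPre} (h : a.lt a) : False := by
  cases a <;> simp_all [TVPre.lt]

instance instLinearOrderW : LinearOrder W where
  le_refl a := Or.inl rfl
  le_trans a b c hab hbc := by
    rcases hab with rfl | hab
    · exact hbc
    rcases hbc with rfl | hbc
    · exact Or.inr hab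
    · exact Or.inr (TVPre.lt_trans hab hbc)
  le_antisymm a b hab hba := by
    rcases hab with rfl | hab
    · rfl
    rcases hba with rfl | hba
    · rfl
    exact absurd (TVPre.lt_trans hab hba) TVPre.lt_irrefl
  le_total a b := by
    obtain ⟨a1, ha⟩ := a
    obtain ⟨b1, hb⟩ := b
    have tri : a1 = b1 ∨ a1.lt b1 ∨ b1.lt a1 := by
      cases a1 <;> cases b1 <;> simp [TVPre.lt] <;> (try rename_i x y) <;>
        (try rcases lt_trichotomy x y with h | h | h) <;> tauto
    rcases tri with h | h | h
    · exact Or.inl (Or.inl (Subtype.ext h))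
    · exact Or.inl (Or.inr h)
    · exact Or.inr (Or.inr h)
  lt_iff_le_not_ge a b := by
    constructor
    · intro h
      refine ⟨Or.inr h, ?_⟩
      rintro (rfl | h')
      · exact TVPre.lt_irrefl h
      · exact TVPre.lt_irrefl (TVPre.lt_trans h h')
    · rintro ⟨rfl | h, h2⟩
      · exact absurd (Or.inl rfl) h2
      · exact h
  toDecidableLE := Classical.decRel _

/-- The false value `F_α`. -/
def WF (a : Ordinal) (h : a < omega1) : W := ⟨.F a, h⟩

/-- The true value `T_α`. -/
def WT (a : Ordinal) (h : a < omega1) : W := ⟨.T a, h⟩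

/-- The undefined value `0`. -/
def WZ : W := ⟨.zero, trivial⟩

/-- `deg w < α` : the degree of `w` (which is `∞` for `0`) is less than `α`. -/
def degLT (w : W) (α : Ordinal) : Prop :=
  match w.1 with
  | .F a => a < α
  | .zero => False
  | .T a => a < α

/-- The set of indices of true values occurring in `M`. -/
def TIdx (M : Set W) : Set Ordinal := {a | ∃ w ∈ M, w.1 = TVPre.T a}

/-- The set of indices of false values occurring in `M`. -/
def FIdx (M : Set W) : Set Ordinal := {a | ∃ w ∈ M, w.1 = TVPre.F a}

lemma mem_lt_omega1_of_TIdx {M : Set W} {a : Ordinal} (h : a ∈ TIdx M) : a < omega1 := by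
  obtain ⟨w, _, hw⟩ := h
  have := w.2
  rw [hw] at this
  exact this

lemma mem_lt_omega1_of_FIdx {M : Set W} {a : Ordinal} (h : a ∈ FIdx M) : a < omega1 := by
  obtain ⟨w, _, hw⟩ := h
  have := w.2
  rw [hw] at this
  exact this

/-- The least upper bound of a subset of `W`. -/
def Wsup (M : Set W) : W :=
  if h : (TIdx M).Nonempty then
    WT (sInf (TIdx M))
      (lt_of_le_of_lt (csInf_le' h.choose_spec) (mem_lt_omega1_of_TIdx h.choose_spec))
  else if WZ ∈ M then WZ
  else if h2 : sSup (FIdx M) < omega1 then WF (sSup (FIdx M)) h2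
  else WZ

/-- The greatest lower bound of a subset of `W`. -/
def Winf (M : Set W) : W :=
  if h : (FIdx M).Nonempty then
    WF (sInf (FIdx M))
      (lt_of_le_of_lt (csInf_le' h.choose_spec) (mem_lt_omega1_of_FIdx h.choose_spec))
  else if WZ ∈ M then WZ
  else if h2 : sSup (TIdx M) < omega1 then WT (sSup (TIdx M)) h2
  else WZ

/-- The semantics of negation on `W`. -/
def Wneg : W → W
  | ⟨.F a, h⟩ => WT (a + 1) (succ_lt_omega1 h)
  | ⟨.zero, _⟩ => WZ
  | ⟨.T a, h⟩ => WF (a + 1) (succ_lt_omega1 h)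

/-! ### Syntax -/

/-- A first-order language with finitely many predicate symbols (at least one),
finitely many function symbols and finitely many constants (at least one). -/
structure Language where
  nPred : ℕ
  predAr : Fin nPred → ℕ
  nFun : ℕ
  funAr : Fin nFun → ℕ
  nConst : ℕ
  npos : 1 ≤ nPred
  cpos : 1 ≤ nConst

variable {L : Language}

/-- Terms of the language; variables are indexed by natural numbers. -/
inductive Term (L : Language) : Type where
  | var : ℕ → Term L
  | const : Fin L.nConst → Term L
  | func : (f : Fin L.nFun) → (Fin (L.funAr f) → Term L) → Term L

/-- A term is ground if it contains no variables. -/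
def Term.ground : Term L → Prop
  | .var _ => False
  | .const _ => True
  | .func _ ts => ∀ i, (ts i).ground

/-- The Herbrand universe: the set of ground terms. -/
def HU (L : Language) : Type := {t : Term L // t.ground}

/-- Formulas of the language. -/
inductive Formula (L : Language) : Type where
  | verum : Formula L
  | falsum : Formula L
  | atom : (p : Fin L.nPred) → (Fin (L.predAr p) → Term L) → Formula L
  | neg : Formula L → Formula L
  | conj : Formula L → Formula L → Formula L
  | disj : Formula L → Formula L → Formula L
  | all : ℕ → Formula L → Formula L
  | ex : ℕ → Formula L → Formula L

/-- A ground atom: a predicate symbol applied to ground terms.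
The Herbrand base `H_B` is the type of ground atoms. -/
structure GroundAtom (L : Language) : Type where
  pred : Fin L.nPred
  args : Fin (L.predAr pred) → HU L

/-- An (infinite-valued Herbrand) interpretation. -/
def Interp (L : Language) : Type 1 := GroundAtom L → W

/-- Evaluation of a term under a variable assignment. -/
def Term.evalT (h : ℕ → HU L) : Term L → HU L
  | .var n => h n
  | .const c => ⟨.const c, trivial⟩
  | .func f ts => ⟨.func f fun i => ((ts i).evalT h).1, fun i => ((ts i).evalT h).2⟩

/-- The infinite-valued semantics of formulas, relative to an interpretation and
a variable assignment. -/
def Formula.eval (I : Interp L) : Formula L → (ℕ → HU L) → W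
  | .verum, _ => WT 0 zero_lt_omega1
  | .falsum, _ => WF 0 zero_lt_omega1
  | .atom p ts, h => I ⟨p, fun i => (ts i).evalT h⟩
  | .neg φ, h => Wneg (φ.eval I h)
  | .conj φ ψ, h => min (φ.eval I h) (ψ.eval I h)
  | .disj φ ψ, h => max (φ.eval I h) (ψ.eval I h)
  | .ex v φ, h => Wsup (Set.range fun u : HU L => φ.eval I (Function.update h v u))
  | .all v φ, h => Winf (Set.range fun u : HU L => φ.eval I (Function.update h v u))

/-- The variables occurring in a term. -/
def Term.vars : Term L → Set ℕ
  | .var n => {n}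
  | .const _ => ∅
  | .func _ ts => ⋃ i, (ts i).vars

/-- The free variables of a formula. -/
def Formula.freeVars : Formula L → Set ℕ
  | .verum => ∅
  | .falsum => ∅
  | .atom _ ts => ⋃ i, (ts i).vars
  | .neg φ => φ.freeVars
  | .conj φ ψ => φ.freeVars ∪ ψ.freeVars
  | .disj φ ψ => φ.freeVars ∪ ψ.freeVars
  | .all v φ => φ.freeVars \ {v}
  | .ex v φ => φ.freeVars \ {v}

/-- Applying a substitution to a term. -/
def Term.subst (σ : ℕ → Term L) : Term L → Term L
  | .var n => σ n
  | .const c => .const c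
  | .func f ts => .func f fun i => (ts i).subst σ

/-- Applying a substitution to a formula (bound variables are not substituted). -/
def Formula.subst (σ : ℕ → Term L) : Formula L → Formula L
  | .verum => .verum
  | .falsum => .falsum
  | .atom p ts => .atom p fun i => (ts i).subst σ
  | .neg φ => .neg (φ.subst σ)
  | .conj φ ψ => .conj (φ.subst σ) (ψ.subst σ)
  | .disj φ ψ => .disj (φ.subst σ) (ψ.subst σ)
  | .all v φ => .all v (φ.subst (Function.update σ v (Term.var v)))
  | .ex v φ => .ex v (φ.subst (Function.update σ v (Term.var v)))

/-- A formula-based rule `A ← φ`: the head is an atom `P(t₁,…,tₛ)`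
(hence distinct from `⊤` and `⊥`) and the body is an arbitrary formula. -/
structure Rule (L : Language) : Type where
  headPred : Fin L.nPred
  headArgs : Fin (L.predAr headPred) → Term L
  body : Formula L

/-- The head of a rule, as an atomic formula. -/
def Rule.headAtom (r : Rule L) : Formula L := .atom r.headPred r.headArgs

/-- A formula-based logic program: a finite set of formula-based rules. -/
structure Program (L : Language) : Type where
  rules : Set (Rule L)
  finite : rules.Finite

/-- The set `P_G` of ground instances of a program `P`: pairs `(Aσ, φσ)` obtained
from a rule `A ← φ` of `P` and a substitution `σ` such that `Aσ` is a ground atom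
and `φσ` has no free variables. -/
def groundInstances (P : Program L) : Set (GroundAtom L × Formula L) :=
  {Aφ | ∃ r ∈ P.rules, ∃ σ : ℕ → Term L,
    (∃ hg : ∀ i, ((r.headArgs i).subst σ).ground,
      Aφ.1 = ⟨r.headPred, fun i => ⟨(r.headArgs i).subst σ, hg i⟩⟩) ∧
    Aφ.2 = r.body.subst σ ∧ (r.body.subst σ).freeVars = ∅}

/-- A default variable assignment (possible since there is at least one constant). -/
def defaultAssignment (L : Language) : ℕ → HU L :=
  fun _ => ⟨.const ⟨0, L.cpos⟩, trivial⟩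

/-- The value of a closed formula (independent of the variable assignment). -/
def Formula.evalClosed (I : Interp L) (φ : Formula L) : W :=
  φ.eval I (defaultAssignment L)

/-- The immediate consequence operator `T_P`. -/
def TP (P : Program L) (I : Interp L) : Interp L :=
  fun A => Wsup {w | ∃ φ : Formula L, (A, φ) ∈ groundInstances P ∧ w = φ.evalClosed I}

/-- `I ∥ F_β` : the set of ground atoms receiving value `F_β` under `I`. -/
def Ifalse (I : Interp L) (β : Ordinal) : Set (GroundAtom L) := {A | (I A).1 = TVPre.F β}

/-- `I ∥ T_β` : the set of ground atoms receiving value `T_β` under `I`. -/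
def Itrue (I : Interp L) (β : Ordinal) : Set (GroundAtom L) := {A | (I A).1 = TVPre.T β}

/-- `I =_α J`. -/
def eqa (α : Ordinal) (I J : Interp L) : Prop :=
  ∀ β ≤ α, Ifalse I β = Ifalse J β ∧ Itrue I β = Itrue J β

/-- `I ⊑_α J`. -/
def sqa (α : Ordinal) (I J : Interp L) : Prop :=
  (∀ β < α, eqa β I J) ∧ Ifalse J α ⊆ Ifalse I α ∧ Itrue I α ⊆ Itrue J α

/-- `I ⊏_α J`. -/
def sqlt (α : Ordinal) (I J : Interp L) : Prop := sqa α I J ∧ ¬ eqa α I J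

/-- `I ⊑_∞ J`. -/
def sqinf (I J : Interp L) : Prop := I = J ∨ ∃ α < omega1, sqlt α I J

/-- `I` satisfies the rule `A ← φ`. -/
def satisfies (I : Interp L) (r : Rule L) : Prop :=
  ∀ h : ℕ → HU L, r.body.eval I h ≤ r.headAtom.eval I h

/-- `I` is a model of `P`. -/
def isModel (I : Interp L) (P : Program L) : Prop := ∀ r ∈ P.rules, satisfies I r

/-- The transfinite iterates `T^β_{P,α}(I)`. -/
def iter (P : Program L) (α : Ordinal) (hα : α < omega1) (I : Interp L)
    (β : Ordinal) : Interp L :=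
  Ordinal.limitRecOn β I (fun _ J => TP P J)
    (fun β _ ih A =>
      if degLT (I A) α then I A
      else if ∃ γ, ∃ hγ : γ < β, (ih γ hγ A).1 = TVPre.T α then WT α hα
      else if ∀ γ, ∀ hγ : γ < β, (ih γ hγ A).1 = TVPre.F α then WF α hα
      else WF (α + 1) (succ_lt_omega1 hα))

/-- The union `⊔_{γ<α} I_γ` of a family of interpretations. -/
def unionInterp (α : Ordinal) (hα : α < omega1) (Ig : ∀ γ, γ < α → Interp L) :
    Interp L := fun A =>
  if h : ∃ ζ, ∃ hζ : ζ < α, ((Ig ζ hζ) A).1 = TVPre.F ζ ∨ ((Ig ζ hζ) A).1 = TVPre.T ζ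
  then Ig h.choose h.choose_spec.choose A
  else WF α hα

/-- The approximants `M_α` of a program `P`. -/
def approx (P : Program L) (α : Ordinal) : Interp L :=
  if hα : α < omega1 then
    if (∀ γ, ∀ _ : γ < α, ∀ ζ, ζ < γ → eqa ζ (approx P ζ) (approx P γ)) ∧
        sqa α (unionInterp α hα fun γ _ => approx P γ)
          (TP P (unionInterp α hα fun γ _ => approx P γ))
    then iter P α hα (unionInterp α hα fun γ _ => approx P γ) omega1
    else fun _ => WF 0 zero_lt_omega1
  else fun _ => WF 0 zero_lt_omega1
termination_by α
decreasing_by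
  all_goals first | assumption | exact lt_trans ‹_› ‹_›

/-- The depth `δ_P` of a program `P`. -/
def depth (P : Program L) : Ordinal :=
  sInf {δ | δ < omega1 ∧ ∀ γ, δ ≤ γ → γ < omega1 →
    Ifalse (approx P γ) γ = ∅ ∧ Itrue (approx P γ) γ = ∅}

/-- The least infinite-valued model `M_P` of a program `P`. -/
def MP (P : Program L) : Interp L := fun A =>
  if degLT (approx P (depth P) A) (depth P) then approx P (depth P) A else WZ

/-! ### Three-valued semantics -/

/-- The three truth values `F < 0 < T`. -/
inductive TV3 : Type where
  | F : TV3
  | Z : TV3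
  | T : TV3
deriving DecidableEq

/-- Numeric coding of the three truth values. -/
def TV3.toNat : TV3 → ℕ
  | .F => 0
  | .Z => 1
  | .T => 2

instance : LinearOrder TV3 :=
  LinearOrder.lift' TV3.toNat (fun a b => by
    cases a <;> cases b <;> simp [TV3.toNat])

/-- A three-valued interpretation. -/
def Interp3 (L : Language) : Type := GroundAtom L → TV3

/-- Supremum of a set of three-valued truth values. -/
def sup3 (S : Set TV3) : TV3 :=
  if TV3.T ∈ S then .T else if TV3.Z ∈ S then .Z else .F

/-- Infimum of a set of three-valued truth values. -/
def inf3 (S : Set TV3) : TV3 :=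
  if TV3.F ∈ S then .F else if TV3.Z ∈ S then .Z else .T

/-- Three-valued negation. -/
def neg3 : TV3 → TV3
  | .F => .T
  | .Z => .Z
  | .T => .F

/-- The three-valued semantics of formulas. -/
def Formula.eval3 (K : Interp3 L) : Formula L → (ℕ → HU L) → TV3
  | .verum, _ => .T
  | .falsum, _ => .F
  | .atom p ts, h => K ⟨p, fun i => (ts i).evalT h⟩
  | .neg φ, h => neg3 (φ.eval3 K h)
  | .conj φ ψ, h => min (φ.eval3 K h) (ψ.eval3 K h)
  | .disj φ ψ, h => max (φ.eval3 K h) (ψ.eval3 K h)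
  | .ex v φ, h => sup3 (Set.range fun u : HU L => φ.eval3 K (Function.update h v u))
  | .all v φ, h => inf3 (Set.range fun u : HU L => φ.eval3 K (Function.update h v u))

/-- Collapsing all false values to `F` and all true values to `T`. -/
def collapse : W → TV3 := fun w =>
  match w.1 with
  | .F _ => .F
  | .zero => .Z
  | .T _ => .T

/-- The collapse of an infinite-valued interpretation. -/
def collapseI (I : Interp L) : Interp3 L := fun A => collapse (I A)

/-- `K` is a three-valued model of `P`. -/
def isModel3 (K : Interp3 L) (P : Program L) : Prop :=
  ∀ r ∈ P.rules, ∀ h : ℕ → HU L, r.body.eval3 K h ≤ r.headAtom.eval3 K h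

/-- The three-valued interpretation `M_{P,3}`. -/
def MP3 (P : Program L) : Interp3 L := collapseI (MP P)

/-- The negation degree of a formula. -/
def Formula.negDeg : Formula L → ℕ
  | .verum => 0
  | .falsum => 0
  | .atom _ _ => 0
  | .neg φ => φ.negDeg + 1
  | .conj φ ψ => max φ.negDeg ψ.negDeg
  | .disj φ ψ => max φ.negDeg ψ.negDeg
  | .all _ φ => φ.negDeg
  | .ex _ φ => φ.negDeg

/-!
Truth values are compared at level `α` through the cuts `v ≤ F_β` and `T_β ≤ v`, `β ≤ α`:
atomwise, `I ⊑_α J` says that the cuts below `α` agree, that `J ≤ F_α` forces `I ≤ F_α`, and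
that `T_α ≤ I` forces `T_α ≤ J`. A cut of a `min`, `max`, `sup` or `inf` is a conjunction,
disjunction, `∀` or `∃` of cuts of the arguments, and a cut of a negation at level `β` is a cut
of the other kind at some level below `β`; hence evaluation of formulas, and with it `T_P`, is
monotone for `⊑_α`. Atomwise, the limit clause of the iteration lies above every earlier stage
and below every common upper bound of them, and transfinite induction gives the chain.
-/

lemma exists_lt_and_le_iff {X : Type*} [Preorder X] {a b : X} :
    (∃ c < b, a ≤ c) ↔ a < b :=
  ⟨fun ⟨_, hcb, hac⟩ => hac.trans_lt hcb, fun h => ⟨a, h, le_rfl⟩⟩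

namespace W

variable {u v w v' w' i m : W} {M : Set W} {α β : Ordinal}

/-- `v ≤ F_β`. -/
def IsFalseLE (v : W) (β : Ordinal) : Prop := ∃ γ ≤ β, v.1 = .F γ

/-- `T_β ≤ v`. -/
def IsTrueLE (v : W) (β : Ordinal) : Prop := ∃ γ ≤ β, v.1 = .T γ

@[simp] lemma isFalseLE_WF {a : Ordinal} {ha : a < omega1} : (WF a ha).IsFalseLE β ↔ a ≤ β := by
  simp [IsFalseLE, WF]

@[simp] lemma not_isFalseLE_WT {a : Ordinal} {ha : a < omega1} : ¬ (WT a ha).IsFalseLE β := by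
  simp [IsFalseLE, WT]

@[simp] lemma not_isFalseLE_WZ : ¬ WZ.IsFalseLE β := by
  simp [IsFalseLE, WZ]

@[simp] lemma isTrueLE_WT {a : Ordinal} {ha : a < omega1} : (WT a ha).IsTrueLE β ↔ a ≤ β := by
  simp [IsTrueLE, WT]

@[simp] lemma not_isTrueLE_WF {a : Ordinal} {ha : a < omega1} : ¬ (WF a ha).IsTrueLE β := by
  simp [IsTrueLE, WF]

@[simp] lemma not_isTrueLE_WZ : ¬ WZ.IsTrueLE β := by
  simp [IsTrueLE, WZ]

lemma IsFalseLE.of_le (hvw : v ≤ w) (hw : w.IsFalseLE β) : v.IsFalseLE β := by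
  rcases hvw with rfl | (hlt : v.1.lt w.1)
  · exact hw
  obtain ⟨γ, hγ, hwγ⟩ := hw
  rw [hwγ] at hlt
  obtain ⟨a | _ | a, _⟩ := v <;> simp only [TVPre.lt] at hlt
  exact ⟨a, hlt.le.trans hγ, rfl⟩

lemma IsTrueLE.of_le (hvw : v ≤ w) (hv : v.IsTrueLE β) : w.IsTrueLE β := by
  rcases hvw with rfl | (hlt : v.1.lt w.1)
  · exact hv
  obtain ⟨γ, hγ, hvγ⟩ := hv
  rw [hvγ] at hlt
  obtain ⟨b | _ | b, _⟩ := w <;> simp only [TVPre.lt] at hlt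
  exact ⟨b, hlt.le.trans hγ, rfl⟩

lemma isFalseLE_min : (min v w).IsFalseLE β ↔ v.IsFalseLE β ∨ w.IsFalseLE β := by
  rcases le_total v w with h | h
  · rw [min_eq_left h]; exact ⟨Or.inl, (·.elim id (·.of_le h))⟩
  · rw [min_eq_right h]; exact ⟨Or.inr, (·.elim (·.of_le h) id)⟩

lemma isFalseLE_max : (max v w).IsFalseLE β ↔ v.IsFalseLE β ∧ w.IsFalseLE β := by
  rcases le_total v w with h | h
  · rw [max_eq_right h]; exact ⟨fun hw => ⟨hw.of_le h, hw⟩, And.right⟩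
  · rw [max_eq_left h]; exact ⟨fun hv => ⟨hv, hv.of_le h⟩, And.left⟩

lemma isTrueLE_min : (min v w).IsTrueLE β ↔ v.IsTrueLE β ∧ w.IsTrueLE β := by
  rcases le_total v w with h | h
  · rw [min_eq_left h]; exact ⟨fun hv => ⟨hv, hv.of_le h⟩, And.left⟩
  · rw [min_eq_right h]; exact ⟨fun hw => ⟨hw.of_le h, hw⟩, And.right⟩

lemma isTrueLE_max : (max v w).IsTrueLE β ↔ v.IsTrueLE β ∨ w.IsTrueLE β := by
  rcases le_total v w with h | h
  · rw [max_eq_right h]; exact ⟨Or.inr, (·.elim (·.of_le h) id)⟩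
  · rw [max_eq_left h]; exact ⟨Or.inl, (·.elim id (·.of_le h))⟩

lemma isFalseLE_Wneg : (Wneg v).IsFalseLE β ↔ ∃ γ < β, v.IsTrueLE γ := by
  obtain ⟨_ | _ | _, _⟩ := v <;>
    simp [Wneg, IsTrueLE, Order.add_one_le_iff, exists_lt_and_le_iff]

lemma isTrueLE_Wneg : (Wneg v).IsTrueLE β ↔ ∃ γ < β, v.IsFalseLE γ := by
  obtain ⟨_ | _ | _, _⟩ := v <;>
    simp [Wneg, IsFalseLE, Order.add_one_le_iff, exists_lt_and_le_iff]

lemma degLT_iff : degLT v α ↔ ∃ β < α, v.IsFalseLE β ∨ v.IsTrueLE β := by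
  obtain ⟨_ | _ | _, _⟩ := v <;> simp [degLT, IsFalseLE, IsTrueLE, exists_lt_and_le_iff]

lemma exists_isTrueLE_iff : (∃ m ∈ M, m.IsTrueLE β) ↔ ∃ γ ∈ TIdx M, γ ≤ β := by
  simp only [IsTrueLE, TIdx, Set.mem_ofPred_eq]
  aesop

lemma exists_isFalseLE_iff : (∃ m ∈ M, m.IsFalseLE β) ↔ ∃ γ ∈ FIdx M, γ ≤ β := by
  simp only [IsFalseLE, FIdx, Set.mem_ofPred_eq]
  aesop

lemma forall_isFalseLE_iff (hT : ¬ (TIdx M).Nonempty) (hZ : WZ ∉ M) :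
    (∀ m ∈ M, m.IsFalseLE β) ↔ ∀ γ ∈ FIdx M, γ ≤ β := by
  constructor
  · rintro h γ ⟨m, hm, hmγ⟩
    obtain ⟨δ, hδ, hmδ⟩ := h m hm
    exact (TVPre.F.inj (hmγ.symm.trans hmδ)).trans_le hδ
  · rintro h ⟨a | _ | a, _⟩ hm
    · exact ⟨a, h a ⟨_, hm, rfl⟩, rfl⟩
    · exact absurd hm hZ
    · exact absurd ⟨a, _, hm, rfl⟩ hT

lemma forall_isTrueLE_iff (hF : ¬ (FIdx M).Nonempty) (hZ : WZ ∉ M) :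
    (∀ m ∈ M, m.IsTrueLE β) ↔ ∀ γ ∈ TIdx M, γ ≤ β := by
  constructor
  · rintro h γ ⟨m, hm, hmγ⟩
    obtain ⟨δ, hδ, hmδ⟩ := h m hm
    exact (TVPre.T.inj (hmγ.symm.trans hmδ)).trans_le hδ
  · rintro h ⟨a | _ | a, _⟩ hm
    · exact absurd ⟨a, _, hm, rfl⟩ hF
    · exact absurd hm hZ
    · exact ⟨a, h a ⟨_, hm, rfl⟩, rfl⟩

lemma isTrueLE_Wsup : (Wsup M).IsTrueLE β ↔ ∃ m ∈ M, m.IsTrueLE β := by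
  rw [exists_isTrueLE_iff]
  unfold Wsup
  split_ifs with hT
  · simp only [isTrueLE_WT]
    exact ⟨fun h => ⟨_, csInf_mem hT, h⟩, fun ⟨γ, hγ, h⟩ => (csInf_le' hγ).trans h⟩
  all_goals simp only [not_isTrueLE_WZ, not_isTrueLE_WF, false_iff]
  all_goals exact fun ⟨γ, hγ, _⟩ => hT ⟨γ, hγ⟩

lemma isFalseLE_Winf : (Winf M).IsFalseLE β ↔ ∃ m ∈ M, m.IsFalseLE β := by
  rw [exists_isFalseLE_iff]
  unfold Winf
  split_ifs with hF
  · simp only [isFalseLE_WF]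
    exact ⟨fun h => ⟨_, csInf_mem hF, h⟩, fun ⟨γ, hγ, h⟩ => (csInf_le' hγ).trans h⟩
  all_goals simp only [not_isFalseLE_WZ, not_isFalseLE_WT, false_iff]
  all_goals exact fun ⟨γ, hγ, _⟩ => hF ⟨γ, hγ⟩

lemma bddAbove_FIdx : BddAbove (FIdx M) :=
  ⟨omega1, fun _ ha => (mem_lt_omega1_of_FIdx ha).le⟩

lemma bddAbove_TIdx : BddAbove (TIdx M) :=
  ⟨omega1, fun _ ha => (mem_lt_omega1_of_TIdx ha).le⟩

lemma isFalseLE_Wsup (hβ : β < omega1) : (Wsup M).IsFalseLE β ↔ ∀ m ∈ M, m.IsFalseLE β := by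
  unfold Wsup
  split_ifs with hT hZ hS
  · obtain ⟨γ, m, hm, hmγ⟩ := hT
    simp only [not_isFalseLE_WT, false_iff, not_forall]
    exact ⟨m, hm, fun ⟨δ, _, hmδ⟩ => TVPre.noConfusion (hmγ.symm.trans hmδ)⟩
  · simp only [not_isFalseLE_WZ, false_iff, not_forall]
    exact ⟨WZ, hZ, not_isFalseLE_WZ⟩
  · rw [isFalseLE_WF, forall_isFalseLE_iff hT hZ, csSup_le_iff' bddAbove_FIdx]
  · rw [forall_isFalseLE_iff hT hZ, ← csSup_le_iff' bddAbove_FIdx]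
    simp only [not_isFalseLE_WZ, false_iff]
    exact fun h => hS (h.trans_lt hβ)

lemma isTrueLE_Winf (hβ : β < omega1) : (Winf M).IsTrueLE β ↔ ∀ m ∈ M, m.IsTrueLE β := by
  unfold Winf
  split_ifs with hF hZ hS
  · obtain ⟨γ, m, hm, hmγ⟩ := hF
    simp only [not_isTrueLE_WF, false_iff, not_forall]
    exact ⟨m, hm, fun ⟨δ, _, hmδ⟩ => TVPre.noConfusion (hmγ.symm.trans hmδ)⟩
  · simp only [not_isTrueLE_WZ, false_iff, not_forall]
    exact ⟨WZ, hZ, not_isTrueLE_WZ⟩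
  · rw [isTrueLE_WT, forall_isTrueLE_iff hF hZ, csSup_le_iff' bddAbove_TIdx]
  · rw [forall_isTrueLE_iff hF hZ, ← csSup_le_iff' bddAbove_TIdx]
    simp only [not_isTrueLE_WZ, false_iff]
    exact fun h => hS (h.trans_lt hβ)

/-- Pointwise `⊑_α`, read through the cuts `v ≤ F_β` and `T_β ≤ v` rather than the values
`F_β`, `T_β` themselves. -/
def sqa (α : Ordinal) (v w : W) : Prop :=
  (∀ β < α, (v.IsFalseLE β ↔ w.IsFalseLE β) ∧ (v.IsTrueLE β ↔ w.IsTrueLE β)) ∧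
    (w.IsFalseLE α → v.IsFalseLE α) ∧ (v.IsTrueLE α → w.IsTrueLE α)

lemma sqa_refl : v.sqa α v := ⟨fun _ _ => ⟨Iff.rfl, Iff.rfl⟩, id, id⟩

lemma sqa.trans (h : u.sqa α v) (h' : v.sqa α w) : u.sqa α w :=
  ⟨fun β hβ => ⟨(h.1 β hβ).1.trans (h'.1 β hβ).1, (h.1 β hβ).2.trans (h'.1 β hβ).2⟩,
    h.2.1 ∘ h'.2.1, h'.2.2 ∘ h.2.2⟩

lemma sqa.min (h : v.sqa α w) (h' : v'.sqa α w') : (min v v').sqa α (min w w') := by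
  simp only [sqa, isFalseLE_min, isTrueLE_min]
  exact ⟨fun β hβ => ⟨or_congr (h.1 β hβ).1 (h'.1 β hβ).1, and_congr (h.1 β hβ).2 (h'.1 β hβ).2⟩,
    Or.imp h.2.1 h'.2.1, And.imp h.2.2 h'.2.2⟩

lemma sqa.max (h : v.sqa α w) (h' : v'.sqa α w') : (max v v').sqa α (max w w') := by
  simp only [sqa, isFalseLE_max, isTrueLE_max]
  exact ⟨fun β hβ => ⟨and_congr (h.1 β hβ).1 (h'.1 β hβ).1, or_congr (h.1 β hβ).2 (h'.1 β hβ).2⟩,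
    And.imp h.2.1 h'.2.1, Or.imp h.2.2 h'.2.2⟩

lemma sqa.Wneg (h : v.sqa α w) : (Wneg v).sqa α (Wneg w) := by
  simp only [sqa, isFalseLE_Wneg, isTrueLE_Wneg]
  refine ⟨fun β hβ => ⟨?_, ?_⟩, ?_, ?_⟩
  · exact exists_congr fun γ => and_congr_right fun hγ => (h.1 γ (hγ.trans hβ)).2
  · exact exists_congr fun γ => and_congr_right fun hγ => (h.1 γ (hγ.trans hβ)).1
  · exact fun ⟨γ, hγ, hw⟩ => ⟨γ, hγ, (h.1 γ hγ).2.mpr hw⟩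
  · exact fun ⟨γ, hγ, hv⟩ => ⟨γ, hγ, (h.1 γ hγ).1.mp hv⟩

lemma sqa_Wsup (hα : α < omega1) {ι : Type*} {f g : ι → W} (h : ∀ i, (f i).sqa α (g i)) :
    (Wsup (Set.range f)).sqa α (Wsup (Set.range g)) := by
  refine ⟨fun β hβ => ⟨?_, ?_⟩, ?_, ?_⟩
  · simp only [isFalseLE_Wsup (hβ.trans hα), Set.forall_mem_range]
    exact forall_congr' fun i => ((h i).1 β hβ).1
  · simp only [isTrueLE_Wsup, Set.exists_range_iff]
    exact exists_congr fun i => ((h i).1 β hβ).2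
  · simp only [isFalseLE_Wsup hα, Set.forall_mem_range]
    exact forall_imp fun i => (h i).2.1
  · simp only [isTrueLE_Wsup, Set.exists_range_iff]
    exact Exists.imp fun i => (h i).2.2

lemma sqa_Winf (hα : α < omega1) {ι : Type*} {f g : ι → W} (h : ∀ i, (f i).sqa α (g i)) :
    (Winf (Set.range f)).sqa α (Winf (Set.range g)) := by
  refine ⟨fun β hβ => ⟨?_, ?_⟩, ?_, ?_⟩
  · simp only [isFalseLE_Winf, Set.exists_range_iff]
    exact exists_congr fun i => ((h i).1 β hβ).1
  · simp only [isTrueLE_Winf (hβ.trans hα), Set.forall_mem_range]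
    exact forall_congr' fun i => ((h i).1 β hβ).2
  · simp only [isFalseLE_Winf, Set.exists_range_iff]
    exact Exists.imp fun i => (h i).2.1
  · simp only [isTrueLE_Winf hα, Set.forall_mem_range]
    exact forall_imp fun i => (h i).2.2

@[simp] lemma degLT_WF {a : Ordinal} {ha : a < omega1} : degLT (WF a ha) α ↔ a < α := Iff.rfl

@[simp] lemma degLT_WT {a : Ordinal} {ha : a < omega1} : degLT (WT a ha) α ↔ a < α := Iff.rfl

lemma sqa.degLT_iff (h : v.sqa α w) : degLT v α ↔ degLT w α := by
  simp only [W.degLT_iff]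
  exact exists_congr fun β => and_congr_right fun hβ => or_congr (h.1 β hβ).1 (h.1 β hβ).2

lemma sqa_of_not_degLT (hv : ¬ degLT v α) (hw : ¬ degLT w α)
    (hF : w.IsFalseLE α → v.IsFalseLE α) (hT : v.IsTrueLE α → w.IsTrueLE α) : v.sqa α w := by
  simp only [W.degLT_iff, not_exists, not_and, not_or] at hv hw
  exact ⟨fun β hβ => ⟨iff_of_false (hv β hβ).1 (hw β hβ).1,
    iff_of_false (hv β hβ).2 (hw β hβ).2⟩, hF, hT⟩

lemma val_eq_F_iff : v.1 = .F β ↔ v.IsFalseLE β ∧ ∀ γ < β, ¬ v.IsFalseLE γ := by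
  constructor
  · intro h
    exact ⟨⟨β, le_rfl, h⟩, fun γ hγ ⟨δ, hδ, h'⟩ =>
      (hδ.trans_lt hγ).ne (TVPre.F.inj (h'.symm.trans h))⟩
  · rintro ⟨⟨δ, hδ, h⟩, hmin⟩
    rcases hδ.lt_or_eq with hlt | rfl
    exacts [absurd ⟨δ, le_rfl, h⟩ (hmin δ hlt), h]

lemma val_eq_T_iff : v.1 = .T β ↔ v.IsTrueLE β ∧ ∀ γ < β, ¬ v.IsTrueLE γ := by
  constructor
  · intro h
    exact ⟨⟨β, le_rfl, h⟩, fun γ hγ ⟨δ, hδ, h'⟩ =>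
      (hδ.trans_lt hγ).ne (TVPre.T.inj (h'.symm.trans h))⟩
  · rintro ⟨⟨δ, hδ, h⟩, hmin⟩
    rcases hδ.lt_or_eq with hlt | rfl
    exacts [absurd ⟨δ, le_rfl, h⟩ (hmin δ hlt), h]

lemma sqa_iff_val : v.sqa α w ↔
    (∀ β < α, (v.1 = .F β ↔ w.1 = .F β) ∧ (v.1 = .T β ↔ w.1 = .T β)) ∧
      (w.1 = .F α → v.1 = .F α) ∧ (v.1 = .T α → w.1 = .T α) := by
  constructor
  · rintro ⟨hlt, hF, hT⟩
    have hmin : ∀ β ≤ α, ((∀ γ < β, ¬ v.IsFalseLE γ) ↔ ∀ γ < β, ¬ w.IsFalseLE γ) ∧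
        ((∀ γ < β, ¬ v.IsTrueLE γ) ↔ ∀ γ < β, ¬ w.IsTrueLE γ) := fun β hβ =>
      ⟨forall₂_congr fun γ hγ => not_congr (hlt γ (hγ.trans_le hβ)).1,
        forall₂_congr fun γ hγ => not_congr (hlt γ (hγ.trans_le hβ)).2⟩
    simp only [val_eq_F_iff, val_eq_T_iff]
    exact ⟨fun β hβ => ⟨and_congr (hlt β hβ).1 (hmin β hβ.le).1,
      and_congr (hlt β hβ).2 (hmin β hβ.le).2⟩,
      And.imp hF (hmin α le_rfl).1.mpr, And.imp hT (hmin α le_rfl).2.mp⟩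
  · rintro ⟨hlt, hF, hT⟩
    refine ⟨fun β hβ => ⟨?_, ?_⟩, ?_, ?_⟩
    · exact exists_congr fun γ => and_congr_right fun hγ => (hlt γ (hγ.trans_lt hβ)).1
    · exact exists_congr fun γ => and_congr_right fun hγ => (hlt γ (hγ.trans_lt hβ)).2
    · rintro ⟨γ, hγ, hw⟩
      rcases hγ.lt_or_eq with hγ | rfl
      exacts [⟨γ, hγ.le, (hlt γ hγ).1.mpr hw⟩, ⟨γ, le_rfl, hF hw⟩]
    · rintro ⟨γ, hγ, hv⟩
      rcases hγ.lt_or_eq with hγ | rfl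
      exacts [⟨γ, hγ.le, (hlt γ hγ).2.mp hv⟩, ⟨γ, le_rfl, hT hv⟩]

lemma sqa.eq_of_degLT (h : v.sqa α w) (hv : degLT v α) : v = w := by
  obtain ⟨hlt, -⟩ := sqa_iff_val.mp h
  obtain ⟨a | _ | a, _⟩ := v
  · exact Subtype.ext ((hlt a hv).1.mp rfl).symm
  · exact hv.elim
  · exact Subtype.ext ((hlt a hv).2.mp rfl).symm

lemma val_eq_F_of_not_degLT (hv : ¬ degLT v α) (h : v.IsFalseLE α) : v.1 = .F α :=
  val_eq_F_iff.mpr ⟨h, fun γ hγ hγ' => hv (W.degLT_iff.mpr ⟨γ, hγ, Or.inl hγ'⟩)⟩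

lemma val_eq_T_of_not_degLT (hv : ¬ degLT v α) (h : v.IsTrueLE α) : v.1 = .T α :=
  val_eq_T_iff.mpr ⟨h, fun γ hγ hγ' => hv (W.degLT_iff.mpr ⟨γ, hγ, Or.inr hγ'⟩)⟩

/-- The value of an atom at a limit stage `γ` of `T^·_{P,α}(I)`, from its value `i` under `I`
and its values `f δ` at the stages `δ < γ`. -/
def limitValue (α : Ordinal) (hα : α < omega1) (i : W) (γ : Ordinal) (f : Ordinal → W) : W :=
  if degLT i α then i
  else if ∃ δ, ∃ _ : δ < γ, (f δ).1 = TVPre.T α then WT α hα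
  else if ∀ δ, ∀ _ : δ < γ, (f δ).1 = TVPre.F α then WF α hα
  else WF (α + 1) (succ_lt_omega1 hα)

variable {hα : α < omega1} {γ δ : Ordinal} {f : Ordinal → W}

lemma limitValue_sqa (hi : i.sqa α m) (hf : ∀ δ < γ, (f δ).sqa α m) :
    (limitValue α hα i γ f).sqa α m := by
  unfold limitValue
  split_ifs with hd hT hF
  · exact hi
  all_goals have hm : ¬ degLT m α := hi.degLT_iff.not.mp hd
  · obtain ⟨δ, hδ, hTδ⟩ := hT
    rw [(Subtype.ext (val_eq_T_of_not_degLT hm ((hf δ hδ).2.2 ⟨α, le_rfl, hTδ⟩)) : m = WT α hα)]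
    exact sqa_refl
  · exact sqa_of_not_degLT (by simp) hm (fun _ => by simp) (by simp)
  · refine sqa_of_not_degLT (by simp) hm (fun hmF => ?_) (by simp)
    obtain ⟨δ, hδ, hne⟩ := not_forall₂.mp hF
    exact absurd (val_eq_F_of_not_degLT ((hf δ hδ).degLT_iff.not.mpr hm) ((hf δ hδ).2.1 hmF)) hne

lemma sqa_limitValue (hi : i.sqa α (f δ)) (hδ : δ < γ) :
    (f δ).sqa α (limitValue α hα i γ f) := by
  unfold limitValue
  split_ifs with hd hT hF
  · rw [← hi.eq_of_degLT hd]
    exact sqa_refl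
  all_goals have hv : ¬ degLT (f δ) α := hi.degLT_iff.not.mp hd
  · exact sqa_of_not_degLT hv (by simp) (by simp) (fun _ => by simp)
  · rw [(Subtype.ext (hF δ hδ) : f δ = WF α hα)]
    exact sqa_refl
  · refine sqa_of_not_degLT hv (by simp) (by simp) (fun hvT => ?_)
    exact absurd ⟨δ, hδ, val_eq_T_of_not_degLT hv hvT⟩ hT

end W

variable {α : Ordinal} {I J K : Interp L}

lemma sqa_iff_forall : sqa α I J ↔ ∀ A, (I A).sqa α (J A) := by
  simp only [W.sqa_iff_val]
  constructor
  · rintro ⟨hlt, hF, hT⟩ A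
    exact ⟨fun β hβ => ⟨Set.ext_iff.mp ((hlt β hβ) β le_rfl).1 A,
      Set.ext_iff.mp ((hlt β hβ) β le_rfl).2 A⟩, fun h => hF h, fun h => hT h⟩
  · intro h
    exact ⟨fun β hβ γ hγ => ⟨Set.ext fun A => ((h A).1 γ (hγ.trans_lt hβ)).1,
      Set.ext fun A => ((h A).1 γ (hγ.trans_lt hβ)).2⟩,
      fun A hA => (h A).2.1 hA, fun A hA => (h A).2.2 hA⟩

lemma sqa_refl : sqa α I I := sqa_iff_forall.mpr fun _ => W.sqa_refl

lemma sqa.trans (h : sqa α I J) (h' : sqa α J K) : sqa α I K :=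
  sqa_iff_forall.mpr fun A => (sqa_iff_forall.mp h A).trans (sqa_iff_forall.mp h' A)

lemma Formula.eval_sqa (hα : α < omega1) (hIJ : sqa α I J) (φ : Formula L) (h : ℕ → HU L) :
    (φ.eval I h).sqa α (φ.eval J h) := by
  induction φ generalizing h with
  | verum | falsum => exact W.sqa_refl
  | atom p ts => exact sqa_iff_forall.mp hIJ _
  | neg φ ih => exact (ih h).Wneg
  | conj φ ψ ihφ ihψ => exact (ihφ h).min (ihψ h)
  | disj φ ψ ihφ ihψ => exact (ihφ h).max (ihψ h)
  | all v φ ih => exact W.sqa_Winf hα fun u => ih _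
  | ex v φ ih => exact W.sqa_Wsup hα fun u => ih _

lemma TP_sqa (hα : α < omega1) (P : Program L) (h : sqa α I J) : sqa α (TP P I) (TP P J) := by
  have hrange (K : Interp L) (A : GroundAtom L) :
      {w | ∃ φ : Formula L, (A, φ) ∈ groundInstances P ∧ w = φ.evalClosed K} =
        Set.range fun φ : {φ // (A, φ) ∈ groundInstances P} => φ.1.evalClosed K := by
    ext
    simp [eq_comm]
  refine sqa_iff_forall.mpr fun A => ?_
  simp only [TP, hrange]
  exact W.sqa_Wsup hα fun φ => φ.1.eval_sqa hα h _

section iter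

variable (P : Program L) (hα : α < omega1) (I : Interp L)

lemma iter_zero : iter P α hα I 0 = I :=
  Ordinal.limitRecOn_zero _ _ _

lemma iter_succ (β : Ordinal) : iter P α hα I (β + 1) = TP P (iter P α hα I β) :=
  Ordinal.limitRecOn_add_one _ _ _ _

lemma iter_limit {γ : Ordinal} (hγ : Order.IsSuccLimit γ) (A : GroundAtom L) :
    iter P α hα I γ A = W.limitValue α hα (I A) γ fun δ => iter P α hα I δ A :=
  congrFun (Ordinal.limitRecOn_limit (motive := fun _ => Interp L) _ _ _ _ hγ :) A

end iter

variable {P : Program L} {hα : α < omega1}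

lemma iter_limit_sqa {γ : Ordinal} (hγ : Order.IsSuccLimit γ) {M : Interp L}
    (hM : ∀ β < γ, sqa α (iter P α hα I β) M) : sqa α (iter P α hα I γ) M := by
  have hI : sqa α I M := by simpa only [iter_zero] using hM 0 hγ.bot_lt
  refine sqa_iff_forall.mpr fun A => ?_
  rw [iter_limit P hα I hγ]
  exact W.limitValue_sqa (sqa_iff_forall.mp hI A) fun δ hδ => sqa_iff_forall.mp (hM δ hδ) A

lemma iter_sqa_of_le_and_succ (hI : sqa α I (TP P I)) (γ : Ordinal) :
    (∀ β ≤ γ, sqa α (iter P α hα I β) (iter P α hα I γ)) ∧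
      sqa α (iter P α hα I γ) (iter P α hα I (γ + 1)) := by
  induction γ using Ordinal.limitRecOn with
  | zero =>
    refine ⟨fun β hβ => ?_, ?_⟩
    · rw [nonpos_iff_eq_zero.mp hβ]
      exact sqa_refl
    · rwa [iter_succ, iter_zero]
  | add_one δ ih =>
    refine ⟨fun β hβ => ?_, ?_⟩
    · rcases hβ.lt_or_eq with hβ | rfl
      exacts [(ih.1 β (Order.lt_add_one_iff.mp hβ)).trans ih.2, sqa_refl]
    · simpa only [← iter_succ] using TP_sqa hα P ih.2
  | limit γ hγ ih =>
    have hlt (β : Ordinal) (hβ : β < γ) : sqa α (iter P α hα I β) (iter P α hα I γ) := by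
      have hIβ : sqa α I (iter P α hα I β) := by simpa only [iter_zero] using (ih β hβ).1 0 bot_le
      refine sqa_iff_forall.mpr fun A => ?_
      rw [iter_limit P hα I hγ]
      exact W.sqa_limitValue (f := fun δ => iter P α hα I δ A) (sqa_iff_forall.mp hIβ A) hβ
    refine ⟨fun β hβ => ?_, ?_⟩
    · rcases hβ.lt_or_eq with hβ | rfl
      exacts [hlt β hβ, sqa_refl]
    · rw [iter_succ]
      refine iter_limit_sqa hγ fun β hβ => (ih β hβ).2.trans ?_
      rw [iter_succ]
      exact TP_sqa hα P (hlt β hβ)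

/-- chain properties of the transfinite iterates `T^β_{P,α}(I)`. -/
theorem iter_chain_properties {L : Language} (P : Program L) (α : Ordinal)
    (hα : α < omega1) (I : Interp L) (hI : sqa α I (TP P I)) :
    (∀ γ : Ordinal, Order.IsSuccLimit γ → ∀ M : Interp L,
      (∀ β < γ, sqa α (iter P α hα I β) M) → sqa α (iter P α hα I γ) M) ∧
    (∀ β γ : Ordinal, β ≤ γ → sqa α (iter P α hα I β) (iter P α hα I γ)) :=
  ⟨fun _ hγ _ hM => iter_limit_sqa hγ hM, fun β γ hβγ => (iter_sqa_of_le_and_succ hI γ).1 β hβγ⟩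

end ILP
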